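/- arXiv:2404.02690 — 3 statements merged into one kernel-verified Lean document; each statement's English description precedes it below -/
import Mathlib

section
/- With the same setup, |D_{i,i} - D̃_{i,i}| ≤ |1 - α|·D_{i,i} for every i. -/
open Finset

theorem D_sub_Dtil_bound {n : ℕ} (A : Matrix (Fin n) (Fin n) ℝ)
    (hA : ∀ i j, 0 < A i j) (D : Fin n → ℝ) (hD : ∀ i, D i = ∑ j, A i j)
    (ε : ℝ) (hε : ε ∈ Set.Ioo (0:ℝ) 1)
    (Atil : Matrix (Fin n) (Fin n) ℝ)
    (hAtil : ∀ i j, Atil i j = if D i * ε < A i j then A i j else 0)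
    (k : ℕ) (hk0 : 0 < k) (hkn : 2 * k ≤ n)
    (hk : ∀ i, (Finset.univ.filter fun j => D i * ε < A i j).card ≤ k)
    (h1 : ((n : ℝ) - k) * ε < 1)
    (α : ℝ) (hα : α = (1 - ((n : ℝ) - k) * ε)⁻¹)
    (Dtil : Fin n → ℝ) (hDtil : ∀ i, Dtil i = α * ∑ j, Atil i j) :
    ∀ i, |D i - Dtil i| ≤ |1 - α| * D i := by
  intro i
  obtain ⟨hε0, hε1⟩ := hε
  have hn0 : 0 < n := by omega
  have hkn' : (2 * k : ℝ) ≤ (n : ℝ) := by exact_mod_cast hkn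
  have hkr : (k : ℝ) ≤ (n : ℝ) := by linarith
  have hnk0 : (0:ℝ) ≤ ((n : ℝ) - k) * ε := by nlinarith
  have hden : 0 < 1 - ((n : ℝ) - k) * ε := by linarith
  have hαmul : α * (1 - ((n : ℝ) - k) * ε) = 1 := by
    rw [hα]; field_simp
  have hα0 : 0 < α := by rw [hα]; positivity
  have hα1 : 1 ≤ α := by nlinarith
  have hDpos : 0 < D i := by
    rw [hD]
    have : Nonempty (Fin n) := ⟨⟨0, hn0⟩⟩
    exact Finset.sum_pos (fun j _ => hA i j) Finset.univ_nonempty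
  have hS1 : ∑ j, Atil i j ≤ D i := by
    rw [hD]
    refine Finset.sum_le_sum fun j _ => ?_
    rw [hAtil]
    split
    · exact le_refl _
    · exact (hA i j).le
  have hS0 : 0 ≤ ∑ j, Atil i j := by
    refine Finset.sum_nonneg fun j _ => ?_
    rw [hAtil]
    split
    · exact (hA i j).le
    · exact le_refl _
  have key : D i - ∑ j, Atil i j ≤ (n : ℝ) * (D i * ε) := by
    have h : ∑ j, (A i j - Atil i j) ≤ ∑ _j : Fin n, D i * ε := by
      refine Finset.sum_le_sum fun j _ => ?_
      rw [hAtil]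
      split_ifs with h
      · simp only [sub_self]; positivity
      · push_neg at h; linarith
    have hsum : ∑ j, (A i j - Atil i j) = (∑ j, A i j) - ∑ j, Atil i j :=
      Finset.sum_sub_distrib (fun j => A i j) (fun j => Atil i j)
    have hconst : ∑ _j : Fin n, D i * ε = (n : ℝ) * (D i * ε) := by
      simp [Finset.sum_const, Finset.card_univ, mul_comm]
    linarith [hD i]
  rw [hDtil i, abs_of_nonpos (by linarith : 1 - α ≤ 0)]
  rw [abs_le]
  constructor
  · nlinarith [mul_le_mul_of_nonneg_left hS1 hα0.le]
  · have h2 : (2:ℝ) ≤ α * (2 - (n : ℝ) * ε) := by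
      nlinarith [mul_nonneg (mul_nonneg hα0.le hε0.le)
        (by linarith : (0:ℝ) ≤ (n : ℝ) - 2 * k)]
    nlinarith [mul_le_mul_of_nonneg_left key hα0.le,
      mul_le_mul_of_nonneg_right h2 hDpos.le]
end

section
/- With the same setup, |D_{i,i}^{-1} - D̃_{i,i}^{-1}| ≤ (n-k)·ε·(Ã_i·1_n)^{-1} for every i. -/
open Finset

theorem inv_D_sub_inv_Dtil_bound {n : ℕ} (A : Matrix (Fin n) (Fin n) ℝ)
    (hA : ∀ i j, 0 < A i j) (D : Fin n → ℝ) (hD : ∀ i, D i = ∑ j, A i j)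
    (ε : ℝ) (hε : ε ∈ Set.Ioo (0:ℝ) 1)
    (Atil : Matrix (Fin n) (Fin n) ℝ)
    (hAtil : ∀ i j, Atil i j = if D i * ε < A i j then A i j else 0)
    (k : ℕ) (hk0 : 0 < k) (hkn : 2 * k ≤ n)
    (hk : ∀ i, (Finset.univ.filter fun j => D i * ε < A i j).card ≤ k)
    (h1 : ((n : ℝ) - k) * ε < 1)
    (hpos : ∀ i, 0 < ∑ j, Atil i j)
    (α : ℝ) (hα : α = (1 - ((n : ℝ) - k) * ε)⁻¹)
    (Dtil : Fin n → ℝ) (hDtil : ∀ i, Dtil i = α * ∑ j, Atil i j) :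
    ∀ i, |(D i)⁻¹ - (Dtil i)⁻¹| ≤ ((n : ℝ) - k) * ε * (∑ j, Atil i j)⁻¹ := by
  intro i
  obtain ⟨hε0, hε1⟩ := hε
  set S := ∑ j, Atil i j with hSdef
  have hS : 0 < S := hpos i
  set c := ((n : ℝ) - k) * ε with hc
  have hkn' : (k : ℝ) ≤ n := by exact_mod_cast le_trans (by omega) hkn
  have hc0 : 0 ≤ c := mul_nonneg (by linarith) hε0.le
  have hc1 : c < 1 := h1
  -- S ≤ D i
  have hSD : S ≤ D i := by
    rw [hSdef, hD]
    apply Finset.sum_le_sum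
    intro j _
    rw [hAtil]
    split
    · exact le_rfl
    · exact (hA i j).le
  have hDpos : 0 < D i := lt_of_lt_of_le hS hSD
  -- cardinal facts
  set F := (Finset.univ.filter fun j => D i * ε < A i j) with hF
  have hsplit : D i = (∑ j ∈ F, A i j) + ∑ j ∈ Finset.univ.filter (fun j => ¬ D i * ε < A i j), A i j := by
    conv_lhs => rw [hD]
    rw [hF]
    exact (Finset.sum_filter_add_sum_filter_not Finset.univ (fun j => D i * ε < A i j) (fun j => A i j)).symm
  have hSval : S = ∑ j ∈ F, A i j := by
    rw [hSdef]
    rw [← Finset.sum_filter_add_sum_filter_not Finset.univ (fun j => D i * ε < A i j) (fun j => Atil i j)]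
    have h1' : ∑ j ∈ F, Atil i j = ∑ j ∈ F, A i j := by
      apply Finset.sum_congr rfl
      intro j hj
      rw [hAtil, if_pos (Finset.mem_filter.mp hj).2]
    have h2' : ∑ j ∈ Finset.univ.filter (fun j => ¬ D i * ε < A i j), Atil i j = 0 := by
      apply Finset.sum_eq_zero
      intro j hj
      rw [hAtil, if_neg (Finset.mem_filter.mp hj).2]
    rw [h1', h2', add_zero]
  have hcardsum : F.card + (Finset.univ.filter (fun j => ¬ D i * ε < A i j)).card = n := by
    rw [Finset.card_filter_add_card_filter_not]
    simp
  set G := Finset.univ.filter (fun j => ¬ D i * ε < A i j) with hG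
  have hsum_small : ∑ j ∈ G, A i j ≤ (G.card : ℝ) * (D i * ε) := by
    have h := Finset.sum_le_card_nsmul G (fun j => A i j) (D i * ε) (by
      intro j hj
      have := (Finset.mem_filter.mp hj).2
      linarith [not_lt.mp this])
    simpa [nsmul_eq_mul] using h
  have hGcard : (G.card : ℝ) ≤ 2 * ((n : ℝ) - k) := by
    have hFk : F.card ≤ k := hk i
    have : G.card = n - F.card := by omega
    have h2 : (G.card : ℝ) = (n : ℝ) - F.card := by
      rw [this]
      have : F.card ≤ n := by omega
      push_cast [Nat.cast_sub this]
      ring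
    rw [h2]
    have : (2 * k : ℝ) ≤ n := by exact_mod_cast hkn
    have hF0 : (0:ℝ) ≤ F.card := Nat.cast_nonneg _
    linarith
  -- key inequality : D i - S ≤ 2 c * D i
  have hkey : D i - S ≤ 2 * c * D i := by
    have : D i - S = ∑ j ∈ G, A i j := by rw [hsplit, hSval]; ring
    rw [this]
    calc ∑ j ∈ G, A i j ≤ (G.card : ℝ) * (D i * ε) := hsum_small
      _ ≤ 2 * ((n : ℝ) - k) * (D i * ε) := by
          apply mul_le_mul_of_nonneg_right hGcard
          positivity
      _ = 2 * c * D i := by rw [hc]; ring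
  -- Dtil i ⁻¹ = (1 - c) * S⁻¹
  have hDtilinv : (Dtil i)⁻¹ = (1 - c) * S⁻¹ := by
    rw [hDtil, hα, mul_inv, inv_inv]
  rw [hDtilinv]
  rw [abs_le]
  have hdinv : (D i)⁻¹ ≤ S⁻¹ := by
    apply inv_anti₀ hS hSD
  have hdinvpos : 0 < (D i)⁻¹ := inv_pos.2 hDpos
  have hSinvpos : 0 < S⁻¹ := inv_pos.2 hS
  constructor
  · -- -(c * S⁻¹) ≤ D⁻¹ - (1-c) S⁻¹   ⟺ (1-2c) S⁻¹ ≤ D⁻¹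
    have hlow : (1 - 2 * c) * S⁻¹ ≤ (D i)⁻¹ := by
      rcases le_or_gt (1 - 2 * c) 0 with h | h
      · have : (1 - 2 * c) * S⁻¹ ≤ 0 := mul_nonpos_of_nonpos_of_nonneg h hSinvpos.le
        linarith
      · have hSd : (1 - 2 * c) * D i ≤ S := by linarith
        have h2 : (1 - 2 * c) ≤ S * (D i)⁻¹ := by
          rw [← div_eq_mul_inv]
          exact (le_div_iff₀ hDpos).2 hSd
        calc (1 - 2 * c) * S⁻¹ ≤ (S * (D i)⁻¹) * S⁻¹ :=
              mul_le_mul_of_nonneg_right h2 hSinvpos.le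
          _ = (D i)⁻¹ := by rw [mul_right_comm, mul_inv_cancel₀ hS.ne', one_mul]
    nlinarith
  · nlinarith
end

section
/- With the same setup, for all i, j: |D_{i,i}^{-1}A_{i,j} - D̃_{i,i}^{-1}Ã_{i,j}| ≤ (n-k)·ε. -/
open Finset

theorem entrywise_softmax_error_bound {n : ℕ} (A : Matrix (Fin n) (Fin n) ℝ)
    (hA : ∀ i j, 0 < A i j) (D : Fin n → ℝ) (hD : ∀ i, D i = ∑ j, A i j)
    (ε : ℝ) (hε : ε ∈ Set.Ioo (0:ℝ) 1)
    (Atil : Matrix (Fin n) (Fin n) ℝ)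
    (hAtil : ∀ i j, Atil i j = if D i * ε < A i j then A i j else 0)
    (k : ℕ) (hk0 : 0 < k) (hkn : 2 * k ≤ n)
    (hk : ∀ i, (Finset.univ.filter fun j => D i * ε < A i j).card ≤ k)
    (h1 : ((n : ℝ) - k) * ε < 1)
    (α : ℝ) (hα : α = (1 - ((n : ℝ) - k) * ε)⁻¹)
    (Dtil : Fin n → ℝ) (hDtil : ∀ i, Dtil i = α * ∑ j, Atil i j) :
    ∀ i j, |(D i)⁻¹ * A i j - (Dtil i)⁻¹ * Atil i j| ≤ ((n : ℝ) - k) * ε := by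
  obtain ⟨hε0, hε1⟩ := hε
  have hkR : (k:ℝ) + 1 ≤ n := by exact_mod_cast (by omega : k + 1 ≤ n)
  have h2k : 2*(k:ℝ) ≤ n := by exact_mod_cast hkn
  have hc1 : (1:ℝ) ≤ (n:ℝ) - k := by linarith
  haveI : Nonempty (Fin n) := Fin.pos_iff_nonempty.mp (by omega)
  intro i j
  have hDpos : 0 < D i := by
    rw [hD]; exact Finset.sum_pos (fun j' _ => hA i j') Finset.univ_nonempty
  by_cases hj : D i * ε < A i j
  · -- surviving entry
    have hAtilj : Atil i j = A i j := by rw [hAtil]; exact if_pos hj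
    set T := ∑ j', Atil i j' with hT
    have hTnn : ∀ j', 0 ≤ Atil i j' := fun j' => by
      rw [hAtil]; split_ifs with h
      exacts [(hA i j').le, le_rfl]
    have hTA : A i j ≤ T := by
      calc A i j = Atil i j := hAtilj.symm
        _ ≤ T := Finset.single_le_sum (fun j' _ => hTnn j') (Finset.mem_univ j)
    have hT0 : 0 < T := lt_of_lt_of_le (hA i j) hTA
    have hTD : T ≤ D i := by
      rw [hD, hT]
      refine Finset.sum_le_sum fun j' _ => ?_
      rw [hAtil]; split_ifs with h
      exacts [le_rfl, (hA i j').le]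
    have hoff : D i - T ≤ (n:ℝ) * (D i * ε) := by
      have hEq : D i - T = ∑ j', (A i j' - Atil i j') := by
        rw [hD, hT, Finset.sum_sub_distrib]
      rw [hEq]
      calc ∑ j', (A i j' - Atil i j') ≤ ∑ _j' : Fin n, D i * ε := by
            refine Finset.sum_le_sum fun j' _ => ?_
            rw [hAtil]; split_ifs with h
            · simp only [sub_self]
              exact (mul_pos hDpos hε0).le
            · simp only [sub_zero]
              exact le_of_not_gt h
        _ = n * (D i * ε) := by
            rw [Finset.sum_const, Finset.card_univ, Fintype.card_fin, nsmul_eq_mul]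
    have habs : |T - D i * (1 - ((n:ℝ)-k)*ε)| ≤ ((n:ℝ)-k)*ε * D i := by
      have hDε : 0 < D i * ε := mul_pos hDpos hε0
      rw [abs_le]
      constructor <;> nlinarith [hDε, hoff, hTD]
    have hDt : Dtil i = α * T := by rw [hDtil]
    rw [hDt, hAtilj, hα, mul_inv, inv_inv]
    have heq : (D i)⁻¹ * A i j - (1 - ((n:ℝ)-k)*ε) * T⁻¹ * A i j
        = A i j * (T - D i * (1 - ((n:ℝ)-k)*ε)) / (D i * T) := by
      field_simp
    rw [heq, abs_div, abs_of_pos (mul_pos hDpos hT0),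
      div_le_iff₀ (mul_pos hDpos hT0), abs_mul, abs_of_pos (hA i j)]
    have hcεD : 0 ≤ ((n:ℝ)-k)*ε * D i := by positivity
    have h1' : A i j * |T - D i * (1 - ((n:ℝ)-k)*ε)| ≤ A i j * (((n:ℝ)-k)*ε * D i) :=
      mul_le_mul_of_nonneg_left habs (hA i j).le
    have h2' : A i j * (((n:ℝ)-k)*ε * D i) ≤ T * (((n:ℝ)-k)*ε * D i) :=
      mul_le_mul_of_nonneg_right hTA hcεD
    nlinarith [h1', h2']
  · -- thresholded entry
    have hAtilj : Atil i j = 0 := by rw [hAtil, if_neg hj]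
    rw [hAtilj, mul_zero, sub_zero,
      abs_of_pos (mul_pos (inv_pos.2 hDpos) (hA i j)), inv_mul_le_iff₀ hDpos]
    have hle : A i j ≤ D i * ε := le_of_not_gt hj
    nlinarith [hle, mul_le_mul_of_nonneg_right hc1 (mul_pos hDpos hε0).le]
end
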